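/- arXiv:2111.14528 — 4 statements merged into one kernel-verified Lean document; each statement's English description precedes it below -/
import Mathlib

section
/- Let (M,d) be a metric space, Y ⊆ M a finite set, and suppose we are given functions r̂_i : Y → ℝ, i = 1,...,I, such that: (a) for every i there exists x_i ∈ M with |r̂_i(y) − d(x_i,y)| < ε₁ for all y ∈ Y, and (b) for every x ∈ M there exists i with |r̂_i(y) − d(x,y)| < ε₁ for all y ∈ Y. Define D^a(y,y') = min_i (r̂_i(y) + r̂_i(y')). If M is a geodesic metric space, then |D^a(y,y') − d(y,y')| ≤ 2ε₁ for all y, y' ∈ Y. -/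
/-- If the functions `r̂ᵢ` approximate the distance functions of points of a geodesic
metric space `M` on the finite set `Y` (conditions (a) and (b)), then the quantity
`D^a(y,y') = min_i (r̂ᵢ(y) + r̂ᵢ(y'))` approximates the distance on `Y` up to `2ε₁`. -/
theorem stmt_1 {M : Type*} [MetricSpace M]
    (hgeo : ∀ a b : M, ∀ t ∈ Set.Icc (0 : ℝ) (dist a b),
      ∃ x : M, dist a x = t ∧ dist x b = dist a b - t)
    (Y : Set M) (hY : Y.Finite) (I : ℕ) (ε₁ : ℝ) (hε₁ : 0 < ε₁)
    (rhat : Fin I → M → ℝ)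
    (ha : ∀ i : Fin I, ∃ x : M, ∀ y ∈ Y, |rhat i y - dist x y| < ε₁)
    (hb : ∀ x : M, ∃ i : Fin I, ∀ y ∈ Y, |rhat i y - dist x y| < ε₁) :
    ∀ y ∈ Y, ∀ y' ∈ Y,
      |(⨅ i : Fin I, (rhat i y + rhat i y')) - dist y y'| ≤ 2 * ε₁ := by

  intro y hy y' hy'
  have hne : Nonempty (Fin I) := by
    obtain ⟨i, _⟩ := hb y; exact ⟨i⟩
  have hbdd : BddBelow (Set.range fun i : Fin I => rhat i y + rhat i y') :=
    Set.Finite.bddBelow (Set.finite_range _)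
  have hlow : dist y y' - 2 * ε₁ ≤ ⨅ i : Fin I, (rhat i y + rhat i y') := by
    apply le_ciInf
    intro i
    obtain ⟨x, hx⟩ := ha i
    have h1 := hx y hy
    have h2 := hx y' hy'
    have htri := dist_triangle y x y'
    rw [abs_lt] at h1 h2
    rw [dist_comm y x] at htri
    linarith [h1.1, h2.1]
  have hup : (⨅ i : Fin I, (rhat i y + rhat i y')) ≤ dist y y' + 2 * ε₁ := by
    obtain ⟨x, hx1, hx2⟩ := hgeo y y' (dist y y' / 2)
      ⟨by positivity, by linarith [dist_nonneg (x := y) (y := y')]⟩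
    obtain ⟨i, hi⟩ := hb x
    have h1 := hi y hy
    have h2 := hi y' hy'
    rw [abs_lt] at h1 h2
    rw [dist_comm x y] at h1
    have : rhat i y + rhat i y' ≤ dist y y' + 2 * ε₁ := by
      linarith [h1.2, h2.2]
    exact le_trans (ciInf_le hbdd i) this
  rw [abs_le]; constructor <;> linarith
end

section
/- There exists a constant C > 1 depending only on Λ ≥ 1 such that for all u, w ∈ (0, Λ²] with u ≤ w, one has u/w − sinh(u)/sinh(w) ≤ C·(1 − u/w). -/
/-!
Split `u/w - sinh u/sinh w = (1 - sinh u/sinh w) - (1 - u/w)`. By the mean value theorem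
`sinh w - sinh u ≤ cosh w * (w - u)`, and `w ≤ sinh w`, so the first term is at most
`cosh w * (1 - u/w)`; as `cosh w ≤ cosh (Λ²)`, the constant `C = cosh (Λ²) + 1` works.
-/

open Real

theorem Real.sinh_sub_sinh_le_cosh_mul {u w : ℝ} (hwu : -w ≤ u) (huw : u ≤ w) :
    sinh w - sinh u ≤ cosh w * (w - u) := by
  refine (convex_Icc (-w) w).image_sub_le_mul_sub_of_deriv_le continuous_sinh.continuousOn
    differentiable_sinh.differentiableOn (fun x hx => ?_) u ⟨hwu, huw⟩ w
    ⟨by linarith, le_rfl⟩ huw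
  rw [interior_Icc] at hx
  rw [deriv_sinh, cosh_le_cosh, abs_of_nonneg (by linarith : 0 ≤ w), abs_le]
  exact ⟨hx.1.le, hx.2.le⟩

theorem Real.one_sub_sinh_div_sinh_le {u w : ℝ} (hu : 0 ≤ u) (hw : 0 < w) (huw : u ≤ w) :
    1 - sinh u / sinh w ≤ cosh w * (1 - u / w) := by
  have hsinh_w : 0 < sinh w := sinh_pos_iff.2 hw
  have hw_le : w ≤ sinh w := self_le_sinh_iff.2 hw.le
  calc 1 - sinh u / sinh w = (sinh w - sinh u) / sinh w := by field_simp
    _ ≤ cosh w * (w - u) / sinh w := by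
        gcongr
        exact sinh_sub_sinh_le_cosh_mul (by linarith) huw
    _ ≤ cosh w * (w - u) / w := by gcongr
    _ = cosh w * (1 - u / w) := by field_simp

theorem Real.div_sub_sinh_div_sinh_le {u w : ℝ} (hu : 0 ≤ u) (hw : 0 < w) (huw : u ≤ w) :
    u / w - sinh u / sinh w ≤ (cosh w - 1) * (1 - u / w) := by
  linarith [one_sub_sinh_div_sinh_le hu hw huw]

theorem stmt_4_general (Λ : ℝ) :
    ∃ C : ℝ, 1 < C ∧
      ∀ u w : ℝ, u ∈ Set.Ioc 0 (Λ ^ 2) → w ∈ Set.Ioc 0 (Λ ^ 2) → u ≤ w →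
        u / w - Real.sinh u / Real.sinh w ≤ C * (1 - u / w) := by
  refine ⟨cosh (Λ ^ 2) + 1, by linarith [one_le_cosh (Λ ^ 2)], ?_⟩
  rintro u w ⟨hu, -⟩ ⟨hw, hwΛ⟩ huw
  have hcosh : cosh w ≤ cosh (Λ ^ 2) := by
    rw [cosh_le_cosh, abs_of_pos hw, abs_of_nonneg (sq_nonneg Λ)]
    exact hwΛ
  have hgap : 0 ≤ 1 - u / w := sub_nonneg.2 ((div_le_one hw).2 huw)
  calc u / w - sinh u / sinh w ≤ (cosh w - 1) * (1 - u / w) :=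
        div_sub_sinh_div_sinh_le hu.le hw huw
    _ ≤ (cosh (Λ ^ 2) + 1) * (1 - u / w) := by gcongr; linarith

/-- There is a constant `C > 1` depending only on `Λ ≥ 1` such that for all
`u, w ∈ (0, Λ²]` with `u ≤ w`, one has `u/w − sinh u / sinh w ≤ C (1 − u/w)`. -/
theorem stmt_4 (Λ : ℝ) (hΛ : 1 ≤ Λ) :
    ∃ C : ℝ, 1 < C ∧
      ∀ u w : ℝ, u ∈ Set.Ioc 0 (Λ ^ 2) → w ∈ Set.Ioc 0 (Λ ^ 2) → u ≤ w →
        u / w - Real.sinh u / Real.sinh w ≤ C * (1 - u / w) :=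
  stmt_4_general Λ
end

section
/- In the hyperbolic plane H of constant curvature −Λ², fix points ā, b̄ with d(ā,b̄) = 1. For r ∈ [−1/2, 1/2] and η ∈ [−π, π], let ξ(r,η) = exp_{b̄}(r cos η · e₁ + r sin η · e₂), where (e₁, e₂) is an orthonormal basis of T_{b̄}H with exp_{b̄}(e₁) = ā. Define f(r,η) = d(ā, ξ(r,η)) − 1 + r cos η. Then f is smooth, f(r,0) = 0 for all r, ∂f/∂r(0,η) = 0 for all η, and consequently there is a constant C₈ (depending only on Λ) such that |f(r,η)| ≤ C₈·|η|·r² for all η ∈ [−π,π] and r ∈ [−1/2,1/2]. -/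
/-- Inverse hyperbolic cosine. -/
noncomputable def arcosh (x : ℝ) : ℝ := Real.log (x + Real.sqrt (x ^ 2 - 1))

/-- In the hyperboloid model of the hyperbolic plane of constant curvature `−Λ²`,
with base point `b̄`, orthonormal tangent basis `(e₁, e₂)` at `b̄`, and `ā = exp_{b̄} e₁`
(so `d(ā, b̄) = 1`), the point `ξ(r,η) = exp_{b̄}(r cos η e₁ + r sin η e₂)` satisfies
`mB(ā, ξ(r,η)) = cosh Λ cosh (Λr) − sinh Λ sinh (Λr) cos η`, and the function
`f(r,η) = d(ā, ξ(r,η)) − 1 + r cos η` is given by this explicit formula. -/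
noncomputable def hypf (Λ r η : ℝ) : ℝ :=
  Λ⁻¹ * arcosh (Real.cosh Λ * Real.cosh (Λ * r) -
      Real.sinh Λ * Real.sinh (Λ * r) * Real.cos η) - 1 + r * Real.cos η

namespace HypAux

noncomputable def hA (Λ u r : ℝ) : ℝ :=
  Real.cosh Λ * Real.cosh (Λ * r) - Real.sinh Λ * Real.sinh (Λ * r) * u

noncomputable def hB (Λ u r : ℝ) : ℝ :=
  Real.cosh Λ * Real.sinh (Λ * r) - Real.sinh Λ * Real.cosh (Λ * r) * u

noncomputable def hpsi (Λ u r : ℝ) : ℝ := Λ⁻¹ * arcosh (hA Λ u r) - 1 + r * u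

noncomputable def hpsi' (Λ u r : ℝ) : ℝ :=
  hB Λ u r / Real.sqrt ((hA Λ u r) ^ 2 - 1) + u

noncomputable def hpsi'' (Λ u r : ℝ) : ℝ :=
  Λ * Real.sinh Λ ^ 2 * (1 - u ^ 2) * hA Λ u r / (Real.sqrt ((hA Λ u r) ^ 2 - 1)) ^ 3

noncomputable def hM (Λ : ℝ) : ℝ :=
  Λ * Real.sinh Λ ^ 2 * Real.cosh (Λ + Λ / 2) / (Real.sqrt (Real.cosh (Λ / 2) ^ 2 - 1)) ^ 3

lemma hypf_eq (Λ r η : ℝ) : hypf Λ r η = hpsi Λ (Real.cos η) r := rfl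

lemma arcosh_cosh {x : ℝ} (hx : 0 ≤ x) : arcosh (Real.cosh x) = x := by
  have h1 : Real.cosh x ^ 2 - 1 = Real.sinh x ^ 2 := by
    have := Real.cosh_sq x; linarith
  rw [arcosh, h1, Real.sqrt_sq (Real.sinh_nonneg_iff.2 hx), Real.cosh_add_sinh, Real.log_exp]

lemma sqrt_sq_sub_one_pos {x : ℝ} (hx : 1 < x) : 0 < Real.sqrt (x ^ 2 - 1) := by
  apply Real.sqrt_pos.2; nlinarith

lemma hasDerivAt_arcosh {x : ℝ} (hx : 1 < x) :
    HasDerivAt arcosh (1 / Real.sqrt (x ^ 2 - 1)) x := by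
  have hs : 0 < Real.sqrt (x ^ 2 - 1) := sqrt_sq_sub_one_pos hx
  have hsq : Real.sqrt (x ^ 2 - 1) ^ 2 = x ^ 2 - 1 := Real.sq_sqrt (by nlinarith)
  have h0 : x ^ 2 - 1 ≠ 0 := by nlinarith
  have hin : HasDerivAt (fun y : ℝ => y + Real.sqrt (y ^ 2 - 1))
      (1 + 2 * x / (2 * Real.sqrt (x ^ 2 - 1))) x := by
    have h := (hasDerivAt_id x).add ((((hasDerivAt_id x).pow 2).sub_const 1).sqrt h0)
    refine h.congr_deriv ?_; symm; simp
  have hpos : x + Real.sqrt (x ^ 2 - 1) ≠ 0 := by positivity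
  have := hin.log hpos
  refine this.congr_deriv ?_; symm
  field_simp
  nlinarith [hsq, hs]

lemma contDiffAt_arcosh {x : ℝ} (hx : 1 < x) : ContDiffAt ℝ (⊤ : ℕ∞) arcosh x := by
  have h0 : x ^ 2 - 1 ≠ 0 := by nlinarith
  have h1 : ContDiffAt ℝ (⊤ : ℕ∞) (fun y : ℝ => y ^ 2 - 1) x :=
    (contDiffAt_id.pow 2).sub contDiffAt_const
  have h2 : ContDiffAt ℝ (⊤ : ℕ∞) (fun y : ℝ => Real.sqrt (y ^ 2 - 1)) x :=
    (Real.contDiffAt_sqrt h0).comp x h1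
  have h3 : ContDiffAt ℝ (⊤ : ℕ∞) (fun y : ℝ => y + Real.sqrt (y ^ 2 - 1)) x :=
    contDiffAt_id.add h2
  have hpos : x + Real.sqrt (x ^ 2 - 1) ≠ 0 := by
    have := Real.sqrt_nonneg (x ^ 2 - 1); positivity
  exact h3.log hpos

variable {Λ u r : ℝ}

lemma hasDerivAt_hA (Λ u r : ℝ) : HasDerivAt (hA Λ u) (Λ * hB Λ u r) r := by
  have hid : HasDerivAt (fun t : ℝ => Λ * t) Λ r := by
    simpa using (hasDerivAt_id r).const_mul Λ
  have h1 : HasDerivAt (fun t : ℝ => Real.cosh Λ * Real.cosh (Λ * t))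
      (Real.cosh Λ * (Real.sinh (Λ * r) * Λ)) r := (hid.cosh).const_mul _
  have h2 : HasDerivAt (fun t : ℝ => Real.sinh Λ * Real.sinh (Λ * t) * u)
      (Real.sinh Λ * (Real.cosh (Λ * r) * Λ) * u) r :=
    ((hid.sinh).const_mul _).mul_const _
  have := h1.sub h2
  refine this.congr_deriv ?_; symm
  unfold hB; ring

lemma hasDerivAt_hB (Λ u r : ℝ) : HasDerivAt (hB Λ u) (Λ * hA Λ u r) r := by
  have hid : HasDerivAt (fun t : ℝ => Λ * t) Λ r := by
    simpa using (hasDerivAt_id r).const_mul Λ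
  have h1 : HasDerivAt (fun t : ℝ => Real.cosh Λ * Real.sinh (Λ * t))
      (Real.cosh Λ * (Real.cosh (Λ * r) * Λ)) r := (hid.sinh).const_mul _
  have h2 : HasDerivAt (fun t : ℝ => Real.sinh Λ * Real.cosh (Λ * t) * u)
      (Real.sinh Λ * (Real.sinh (Λ * r) * Λ) * u) r :=
    ((hid.cosh).const_mul _).mul_const _
  have := h1.sub h2
  refine this.congr_deriv ?_; symm
  unfold hA; ring

lemma hA_lower (hΛ : 0 < Λ) (hu : |u| ≤ 1) (hr : |r| ≤ 1 / 2) :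
    Real.cosh (Λ / 2) ≤ hA Λ u r := by
  have hs : 0 < Real.sinh Λ := Real.sinh_pos_iff.2 hΛ
  have hmul : Λ * |r| = |Λ * r| := by rw [abs_mul, abs_of_pos hΛ]
  have habs : Real.sinh (Λ * |r|) = |Real.sinh (Λ * r)| := by
    rw [hmul, ← Real.abs_sinh]
  have hcabs : Real.cosh (Λ * |r|) = Real.cosh (Λ * r) := by
    rw [hmul, Real.cosh_abs]
  have key : Real.cosh (Λ - Λ * |r|) ≤ hA Λ u r := by
    rw [Real.cosh_sub, hcabs, habs]
    unfold hA
    have h1 : Real.sinh (Λ * r) * u ≤ |Real.sinh (Λ * r)| := by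
      calc Real.sinh (Λ * r) * u ≤ |Real.sinh (Λ * r) * u| := le_abs_self _
        _ = |Real.sinh (Λ * r)| * |u| := abs_mul _ _
        _ ≤ |Real.sinh (Λ * r)| * 1 := by
            exact mul_le_mul_of_nonneg_left hu (abs_nonneg _)
        _ = |Real.sinh (Λ * r)| := mul_one _
    nlinarith
  refine le_trans ?_ key
  rw [Real.cosh_le_cosh]
  have h0 : 0 ≤ |r| := abs_nonneg r
  have e1 : |Λ / 2| = Λ / 2 := abs_of_pos (by positivity)
  have e2 : abs (Λ - Λ * |r|) = Λ - Λ * |r| := abs_of_pos (by nlinarith)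
  rw [e1, e2]
  nlinarith

lemma one_lt_hA (hΛ : 0 < Λ) (hu : |u| ≤ 1) (hr : |r| ≤ 1 / 2) : 1 < hA Λ u r :=
  lt_of_lt_of_le (Real.one_lt_cosh.2 (by positivity)) (hA_lower hΛ hu hr)

lemma hA_upper (hΛ : 0 < Λ) (hu : |u| ≤ 1) (hr : |r| ≤ 1 / 2) :
    hA Λ u r ≤ Real.cosh (Λ + Λ / 2) := by
  have hs : 0 < Real.sinh Λ := Real.sinh_pos_iff.2 hΛ
  have hmul : Λ * |r| = |Λ * r| := by rw [abs_mul, abs_of_pos hΛ]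
  have habs : Real.sinh (Λ * |r|) = |Real.sinh (Λ * r)| := by
    rw [hmul, ← Real.abs_sinh]
  have hcabs : Real.cosh (Λ * |r|) = Real.cosh (Λ * r) := by
    rw [hmul, Real.cosh_abs]
  have key : hA Λ u r ≤ Real.cosh (Λ + Λ * |r|) := by
    rw [Real.cosh_add, hcabs, habs]
    unfold hA
    have h1 : -(Real.sinh (Λ * r) * u) ≤ |Real.sinh (Λ * r)| := by
      calc -(Real.sinh (Λ * r) * u) ≤ |Real.sinh (Λ * r) * u| := neg_le_abs _
        _ = |Real.sinh (Λ * r)| * |u| := abs_mul _ _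
        _ ≤ |Real.sinh (Λ * r)| * 1 :=
            mul_le_mul_of_nonneg_left hu (abs_nonneg _)
        _ = |Real.sinh (Λ * r)| := mul_one _
    nlinarith
  refine key.trans ?_
  rw [Real.cosh_le_cosh]
  have h0 : 0 ≤ |r| := abs_nonneg r
  have e1 : abs (Λ + Λ * |r|) = Λ + Λ * |r| := abs_of_pos (by nlinarith)
  have e2 : |Λ + Λ / 2| = Λ + Λ / 2 := abs_of_pos (by nlinarith)
  rw [e1, e2]
  nlinarith

lemma sq_identity (Λ u r : ℝ) :
    (hA Λ u r) ^ 2 - (hB Λ u r) ^ 2 = Real.cosh Λ ^ 2 - Real.sinh Λ ^ 2 * u ^ 2 := by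
  unfold hA hB
  linear_combination (Real.cosh Λ ^ 2 - Real.sinh Λ ^ 2 * u ^ 2) *
    Real.cosh_sq_sub_sinh_sq (Λ * r)

lemma hasDerivAt_hpsi (hΛ : 0 < Λ) (h1 : 1 < hA Λ u r) :
    HasDerivAt (hpsi Λ u) (hpsi' Λ u r) r := by
  have hs : 0 < Real.sqrt ((hA Λ u r) ^ 2 - 1) := sqrt_sq_sub_one_pos h1
  have harc := (hasDerivAt_arcosh h1).comp r (hasDerivAt_hA Λ u r)
  have h := (harc.const_mul Λ⁻¹).sub_const 1 |>.add ((hasDerivAt_id r).mul_const u)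
  refine h.congr_deriv ?_; symm
  unfold hpsi'
  field_simp

lemma hasDerivAt_hpsi' (h1 : 1 < hA Λ u r) :
    HasDerivAt (hpsi' Λ u) (hpsi'' Λ u r) r := by
  set a := hA Λ u r with ha
  have hpos : 0 < a ^ 2 - 1 := by nlinarith
  have hs : 0 < Real.sqrt (a ^ 2 - 1) := Real.sqrt_pos.2 hpos
  have hsq : Real.sqrt (a ^ 2 - 1) ^ 2 = a ^ 2 - 1 := Real.sq_sqrt hpos.le
  have hgA : HasDerivAt (fun t => (hA Λ u t) ^ 2 - 1)
      (2 * hA Λ u r ^ 1 * (Λ * hB Λ u r)) r :=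
    ((hasDerivAt_hA Λ u r).pow 2).sub_const 1
  have hg : HasDerivAt (fun t => Real.sqrt ((hA Λ u t) ^ 2 - 1))
      (2 * a ^ 1 * (Λ * hB Λ u r) / (2 * Real.sqrt (a ^ 2 - 1))) r :=
    hgA.sqrt (by nlinarith)
  have h := ((hasDerivAt_hB Λ u r).div hg hs.ne').add_const u
  refine h.congr_deriv ?_; symm
  unfold hpsi''
  rw [← ha]
  have hiden : (hB Λ u r) ^ 2 = a ^ 2 - (Real.cosh Λ ^ 2 - Real.sinh Λ ^ 2 * u ^ 2) := by
    have := sq_identity Λ u r; rw [← ha] at this; linarith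
  have hc : Real.cosh Λ ^ 2 = Real.sinh Λ ^ 2 + 1 := Real.cosh_sq Λ
  field_simp
  have hB2 : hB Λ u r ^ 2 = Real.sqrt (a ^ 2 - 1) ^ 2 - Real.sinh Λ ^ 2 * (1 - u ^ 2) := by
    linarith
  linear_combination Λ * hB2

lemma hpsi_zero (hΛ : 0 < Λ) (u : ℝ) : hpsi Λ u 0 = 0 := by
  have : hA Λ u 0 = Real.cosh Λ := by unfold hA; simp
  rw [hpsi, this, arcosh_cosh hΛ.le]
  field_simp
  ring

lemma hpsi'_zero (hΛ : 0 < Λ) (u : ℝ) : hpsi' Λ u 0 = 0 := by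
  have hs : 0 < Real.sinh Λ := Real.sinh_pos_iff.2 hΛ
  have hA0 : hA Λ u 0 = Real.cosh Λ := by unfold hA; simp
  have hB0 : hB Λ u 0 = -(Real.sinh Λ * u) := by unfold hB; simp
  have hsq : Real.cosh Λ ^ 2 - 1 = Real.sinh Λ ^ 2 := by
    have := Real.cosh_sq Λ; linarith
  rw [hpsi', hA0, hB0, hsq, Real.sqrt_sq hs.le]
  field_simp
  ring

lemma hM_pos (hΛ : 0 < Λ) : 0 < hM Λ := by
  have hs : 0 < Real.sinh Λ := Real.sinh_pos_iff.2 hΛ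
  have hc : 1 < Real.cosh (Λ / 2) := Real.one_lt_cosh.2 (by positivity)
  have h1 : 0 < Real.sqrt (Real.cosh (Λ / 2) ^ 2 - 1) := Real.sqrt_pos.2 (by nlinarith)
  have h2 : 0 < Real.cosh (Λ + Λ / 2) := Real.cosh_pos _
  unfold hM
  positivity

lemma hpsi''_bound (hΛ : 0 < Λ) (hu : |u| ≤ 1) (hr : |r| ≤ 1 / 2) :
    |hpsi'' Λ u r| ≤ hM Λ * (1 - u ^ 2) := by
  have hs : 0 < Real.sinh Λ := Real.sinh_pos_iff.2 hΛ
  have hc : 1 < Real.cosh (Λ / 2) := Real.one_lt_cosh.2 (by positivity)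
  have hA1 : 1 < hA Λ u r := one_lt_hA hΛ hu hr
  have hAl : Real.cosh (Λ / 2) ≤ hA Λ u r := hA_lower hΛ hu hr
  have hAu : hA Λ u r ≤ Real.cosh (Λ + Λ / 2) := hA_upper hΛ hu hr
  have hu2 : 0 ≤ 1 - u ^ 2 := by
    have := abs_le.1 hu; nlinarith
  have hden0 : 0 < Real.sqrt (Real.cosh (Λ / 2) ^ 2 - 1) := Real.sqrt_pos.2 (by nlinarith)
  have hdenr : 0 < Real.sqrt ((hA Λ u r) ^ 2 - 1) := sqrt_sq_sub_one_pos hA1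
  have hdenle : (Real.sqrt (Real.cosh (Λ / 2) ^ 2 - 1)) ^ 3 ≤
      (Real.sqrt ((hA Λ u r) ^ 2 - 1)) ^ 3 := by
    have hss : Real.sqrt (Real.cosh (Λ / 2) ^ 2 - 1) ≤ Real.sqrt ((hA Λ u r) ^ 2 - 1) :=
      Real.sqrt_le_sqrt (by nlinarith)
    exact pow_le_pow_left₀ (Real.sqrt_nonneg _) hss 3
  have hA0 : 0 < hA Λ u r := lt_trans one_pos hA1
  have hnum_nonneg : 0 ≤ Λ * Real.sinh Λ ^ 2 * (1 - u ^ 2) * hA Λ u r :=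
    mul_nonneg (mul_nonneg (mul_nonneg hΛ.le (sq_nonneg _)) hu2) hA0.le
  have hnum'_nonneg : 0 ≤ Λ * Real.sinh Λ ^ 2 * (1 - u ^ 2) * Real.cosh (Λ + Λ / 2) :=
    mul_nonneg (mul_nonneg (mul_nonneg hΛ.le (sq_nonneg _)) hu2) (Real.cosh_pos _).le
  have hnn : 0 ≤ hpsi'' Λ u r := by
    unfold hpsi''
    exact div_nonneg hnum_nonneg (pow_nonneg (Real.sqrt_nonneg _) 3)
  rw [abs_of_nonneg hnn]
  unfold hpsi''
  have hnum_le : Λ * Real.sinh Λ ^ 2 * (1 - u ^ 2) * hA Λ u r ≤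
      Λ * Real.sinh Λ ^ 2 * (1 - u ^ 2) * Real.cosh (Λ + Λ / 2) := by
    apply mul_le_mul_of_nonneg_left hAu
    exact mul_nonneg (mul_nonneg hΛ.le (sq_nonneg _)) hu2
  calc Λ * Real.sinh Λ ^ 2 * (1 - u ^ 2) * hA Λ u r / (Real.sqrt ((hA Λ u r) ^ 2 - 1)) ^ 3
      ≤ Λ * Real.sinh Λ ^ 2 * (1 - u ^ 2) * Real.cosh (Λ + Λ / 2) /
        (Real.sqrt (Real.cosh (Λ / 2) ^ 2 - 1)) ^ 3 :=
        div_le_div₀ hnum'_nonneg hnum_le (pow_pos hden0 3) hdenle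
    _ = hM Λ * (1 - u ^ 2) := by unfold hM; ring

lemma hpsi_bound (hΛ : 0 < Λ) (hu : |u| ≤ 1) (hr : r ∈ Set.Icc (-(1 / 2 : ℝ)) (1 / 2)) :
    |hpsi Λ u r| ≤ hM Λ * (1 - u ^ 2) * r ^ 2 := by
  set I : Set ℝ := Set.Icc (-(1 / 2 : ℝ)) (1 / 2) with hI
  have hmem_abs : ∀ t ∈ I, |t| ≤ 1 / 2 := fun t ht => abs_le.2 ⟨ht.1, ht.2⟩
  set K := hM Λ * (1 - u ^ 2) with hK
  have hK0 : 0 ≤ K := by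
    have := hM_pos hΛ
    have := abs_le.1 hu
    have : 0 ≤ 1 - u ^ 2 := by nlinarith
    positivity
  have h0I : (0 : ℝ) ∈ I := by rw [hI]; norm_num
  -- step 1 : |hpsi' t| ≤ K * |t| on I
  have step1 : ∀ t ∈ I, |hpsi' Λ u t| ≤ K * |t| := by
    intro t ht
    have h := Convex.norm_image_sub_le_of_norm_hasDerivWithin_le
      (f := hpsi' Λ u) (f' := hpsi'' Λ u) (s := I) (C := K)
      (fun x hx => (hasDerivAt_hpsi' (one_lt_hA hΛ hu (hmem_abs x hx))).hasDerivWithinAt)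
      (fun x hx => by
        simpa [Real.norm_eq_abs] using hpsi''_bound hΛ hu (hmem_abs x hx))
      (convex_Icc _ _) h0I ht
    simpa [hpsi'_zero hΛ u, Real.norm_eq_abs] using h
  -- step 2 : |hpsi r| ≤ K * |r| * |r|
  have hrI : r ∈ I := hr
  have hsub : Set.uIcc (0 : ℝ) r ⊆ I := by
    intro t ht
    rcases Set.mem_uIcc.1 ht with ⟨h1, h2⟩ | ⟨h1, h2⟩
    · exact ⟨le_trans (by norm_num) h1, le_trans h2 hr.2⟩
    · exact ⟨le_trans hr.1 h1, le_trans h2 (by norm_num)⟩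
  have habs_le : ∀ t ∈ Set.uIcc (0 : ℝ) r, |t| ≤ |r| := by
    intro t ht
    rcases Set.mem_uIcc.1 ht with ⟨h1, h2⟩ | ⟨h1, h2⟩
    · rw [abs_of_nonneg h1]; exact h2.trans (le_abs_self r)
    · rw [abs_of_nonpos h2]; exact (neg_le_neg h1).trans (neg_le_abs r)
  have step2 := Convex.norm_image_sub_le_of_norm_hasDerivWithin_le
    (f := hpsi Λ u) (f' := hpsi' Λ u) (s := Set.uIcc (0 : ℝ) r) (C := K * |r|)
    (fun x hx => (hasDerivAt_hpsi hΛ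
        (one_lt_hA hΛ hu (hmem_abs x (hsub hx)))).hasDerivWithinAt)
    (fun x hx => by
      have := step1 x (hsub hx)
      have habs := habs_le x hx
      have : |hpsi' Λ u x| ≤ K * |r| := this.trans (by nlinarith [abs_nonneg x])
      simpa [Real.norm_eq_abs] using this)
    (convex_uIcc _ _) (Set.left_mem_uIcc) (Set.right_mem_uIcc)
  rw [hpsi_zero hΛ u] at step2
  have : |hpsi Λ u r| ≤ K * |r| * |r| := by
    simpa [Real.norm_eq_abs] using step2
  calc |hpsi Λ u r| ≤ K * |r| * |r| := this
    _ = K * r ^ 2 := by rw [mul_assoc, ← abs_mul, ← sq, abs_of_nonneg (sq_nonneg r)]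
    _ = hM Λ * (1 - u ^ 2) * r ^ 2 := by rw [hK]

end HypAux

open HypAux

/-- The function `f(r,η) = d(ā, ξ(r,η)) − 1 + r cos η` is smooth on
`[−1/2, 1/2] × [−π, π]`, vanishes for `η = 0`, has vanishing `r`-derivative at `r = 0`,
and consequently satisfies `|f(r,η)| ≤ C₈ |η| r²` for a constant `C₈` depending only
on `Λ`. -/
theorem stmt_7 (Λ : ℝ) (hΛ : 0 < Λ) :
    ContDiffOn ℝ (⊤ : ℕ∞) (fun p : ℝ × ℝ => hypf Λ p.1 p.2)
        (Set.Icc (-(1 / 2 : ℝ)) (1 / 2) ×ˢ Set.Icc (-Real.pi) Real.pi) ∧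
    (∀ r ∈ Set.Icc (-(1 / 2 : ℝ)) (1 / 2), hypf Λ r 0 = 0) ∧
    (∀ η ∈ Set.Icc (-Real.pi) Real.pi, deriv (fun r => hypf Λ r η) 0 = 0) ∧
    ∃ C₈ : ℝ, 0 < C₈ ∧ ∀ η ∈ Set.Icc (-Real.pi) Real.pi,
      ∀ r ∈ Set.Icc (-(1 / 2 : ℝ)) (1 / 2), |hypf Λ r η| ≤ C₈ * |η| * r ^ 2 := by
  refine ⟨?_, ?_, ?_, ?_⟩
  · -- smoothness
    intro p hp
    have hr : |p.1| ≤ 1 / 2 := abs_le.2 ⟨hp.1.1, hp.1.2⟩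
    have hu : |Real.cos p.2| ≤ 1 := Real.abs_cos_le_one p.2
    have h1 : 1 < hA Λ (Real.cos p.2) p.1 := one_lt_hA hΛ hu hr
    have hAc : ContDiffAt ℝ (⊤ : ℕ∞) (fun q : ℝ × ℝ => hA Λ (Real.cos q.2) q.1) p := by
      unfold hA
      exact (contDiffAt_const.mul ((Real.contDiff_cosh.contDiffAt).comp p
          (contDiffAt_const.mul contDiffAt_fst))).sub
        ((contDiffAt_const.mul ((Real.contDiff_sinh.contDiffAt).comp p
          (contDiffAt_const.mul contDiffAt_fst))).mul
          ((Real.contDiff_cos.contDiffAt).comp p contDiffAt_snd))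
    have harc : ContDiffAt ℝ (⊤ : ℕ∞) (fun q : ℝ × ℝ => arcosh (hA Λ (Real.cos q.2) q.1)) p :=
      ContDiffAt.comp (g := arcosh) p (contDiffAt_arcosh h1) hAc
    have hfull : ContDiffAt ℝ (⊤ : ℕ∞) (fun q : ℝ × ℝ =>
        Λ⁻¹ * arcosh (hA Λ (Real.cos q.2) q.1) - 1 + q.1 * Real.cos q.2) p :=
      ((contDiffAt_const.mul harc).sub contDiffAt_const).add
        (contDiffAt_fst.mul ((Real.contDiff_cos.contDiffAt).comp p contDiffAt_snd))
    exact hfull.contDiffWithinAt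
  · -- vanishing at η = 0
    intro r hr
    have hr' : |r| ≤ 1 / 2 := abs_le.2 ⟨hr.1, hr.2⟩
    have hA0 : hA Λ 1 r = Real.cosh (Λ - Λ * r) := by
      rw [Real.cosh_sub]; unfold hA; ring
    have hpos : 0 ≤ Λ - Λ * r := by
      have := abs_le.1 hr'; nlinarith
    rw [hypf_eq, show Real.cos 0 = 1 from Real.cos_zero, hpsi, hA0, arcosh_cosh hpos]
    field_simp
    ring
  · -- vanishing derivative at r = 0
    intro η hη
    have hu : |Real.cos η| ≤ 1 := Real.abs_cos_le_one η
    have h1 : 1 < hA Λ (Real.cos η) 0 := one_lt_hA hΛ hu (by norm_num)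
    have hd := hasDerivAt_hpsi hΛ h1
    have : deriv (fun r => hypf Λ r η) 0 = hpsi' Λ (Real.cos η) 0 := by
      apply HasDerivAt.deriv
      simpa [hypf_eq] using hd
    rw [this, hpsi'_zero hΛ]
  · -- the quadratic bound
    refine ⟨hM Λ * Real.pi + 1, by nlinarith [hM_pos hΛ, Real.pi_pos], ?_⟩
    intro η hη r hr
    have hu : |Real.cos η| ≤ 1 := Real.abs_cos_le_one η
    have hb := hpsi_bound hΛ hu hr
    rw [hypf_eq]
    refine hb.trans ?_
    have hsin : 1 - Real.cos η ^ 2 = Real.sin η ^ 2 := by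
      have := Real.sin_sq_add_cos_sq η; linarith
    have hsinle : Real.sin η ^ 2 ≤ η ^ 2 := Real.sin_sq_le_sq
    have hη2 : η ^ 2 ≤ |η| * Real.pi := by
      rw [pow_two, ← abs_mul_abs_self η]
      have h1 : |η| ≤ Real.pi := abs_le.2 ⟨hη.1, hη.2⟩
      exact mul_le_mul_of_nonneg_left h1 (abs_nonneg η)
    have hM0 : 0 < hM Λ := hM_pos hΛ
    have h2 : 1 - Real.cos η ^ 2 ≤ |η| * Real.pi := by
      rw [hsin]; exact hsinle.trans hη2
    have hr2 : (0 : ℝ) ≤ r ^ 2 := sq_nonneg r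
    calc hM Λ * (1 - Real.cos η ^ 2) * r ^ 2
        ≤ hM Λ * (|η| * Real.pi) * r ^ 2 := by
          apply mul_le_mul_of_nonneg_right _ hr2
          exact mul_le_mul_of_nonneg_left h2 hM0.le
      _ = hM Λ * Real.pi * |η| * r ^ 2 := by ring
      _ ≤ (hM Λ * Real.pi + 1) * |η| * r ^ 2 := by
          apply mul_le_mul_of_nonneg_right _ hr2
          apply mul_le_mul_of_nonneg_right _ (abs_nonneg η)
          linarith
end

section
/- Let M be a closed Riemannian manifold with Sec_M ≥ −Λ², and let p, q, x ∈ M with d(p,q) > Λ⁻¹/2, d(q,x) ≥ Λ⁻¹, satisfying the almost-minimizing condition d(p,q) + d(q,x) ≤ d(p,x) + δ for some δ > 0. Then for the angle η at q between minimizing geodesics [qp] and [qx], one has (π − η)² ≤ 2 C₇⁻¹ δ, where C₇ is the uniform hinge-comparison constant depending only on Λ. -/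
/-!
Walk a distance `s = Λ⁻¹/4` from `q` along both geodesics. Since `p, q, x` almost minimize,
the shortcut through the two points loses at most `δ`, so they are at distance at least
`2s - δ`. The hinge comparison bounds that distance from above by the hyperbolic third side,
and comparing `cosh` with its tangent line at `2Λs = 1/2` yields `tanh (1/4) (1 + cos η) ≤ 2Λδ`.
Jordan's inequality `sin θ ≥ 2θ/π` turns `1 + cos η = 2 sin² ((π - η)/2)` into a bound on
`(π - η)²`.
-/

open Real Set

def IsUnitSpeedSegment {M : Type*} [PseudoMetricSpace M] (γ : ℝ → M) (L : ℝ) : Prop :=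
  ∀ s ∈ Icc 0 L, ∀ t ∈ Icc 0 L, dist (γ s) (γ t) = |s - t|

theorem IsUnitSpeedSegment.dist_apply_end {M : Type*} [PseudoMetricSpace M] {γ : ℝ → M}
    {L s : ℝ} (hγ : IsUnitSpeedSegment γ L) (hs : s ∈ Icc 0 L) :
    dist (γ s) (γ L) = L - s := by
  rw [hγ s hs L ⟨hs.1.trans hs.2, le_rfl⟩, abs_sub_comm, abs_of_nonneg (sub_nonneg.2 hs.2)]

theorem add_sub_le_dist_of_almost_minimizing {M : Type*} [PseudoMetricSpace M] {p q x : M}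
    {γ₁ γ₂ : ℝ → M} {δ s t : ℝ} (halm : dist p q + dist q x ≤ dist p x + δ)
    (hγ₁p : γ₁ (dist q p) = p) (hγ₂x : γ₂ (dist q x) = x)
    (hγ₁ : IsUnitSpeedSegment γ₁ (dist q p)) (hγ₂ : IsUnitSpeedSegment γ₂ (dist q x))
    (hs : s ∈ Icc 0 (dist q p)) (ht : t ∈ Icc 0 (dist q x)) :
    s + t - δ ≤ dist (γ₁ s) (γ₂ t) := by
  have hpa : dist p (γ₁ s) = dist q p - s := by
    rw [dist_comm, ← hγ₁.dist_apply_end hs, hγ₁p]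
  have hbx : dist (γ₂ t) x = dist q x - t := by
    rw [← hγ₂.dist_apply_end ht, hγ₂x]
  have := dist_triangle4 p (γ₁ s) (γ₂ t) x
  linarith [dist_comm p q]

theorem cosh_add_sinh_mul_sub_le_cosh (a y : ℝ) : cosh a + sinh a * (y - a) ≤ cosh y := by
  have e₁ : exp a * exp (y - a) = exp y := by rw [← exp_add]; ring_nf
  have e₂ : exp (-a) * exp (-(y - a)) = exp (-y) := by rw [← exp_add]; ring_nf
  have hdiff : cosh y - (cosh a + sinh a * (y - a)) =
      (exp a * (exp (y - a) - (y - a + 1)) + exp (-a) * (exp (-(y - a)) - (-(y - a) + 1))) / 2 := by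
    rw [cosh_eq, cosh_eq, sinh_eq]
    linear_combination (-e₁ - e₂) / 2
  have h₁ := mul_nonneg (exp_pos a).le (sub_nonneg.2 (add_one_le_exp (y - a)))
  have h₂ := mul_nonneg (exp_pos (-a)).le (sub_nonneg.2 (add_one_le_exp (-(y - a))))
  linarith

/-- `hD` is the hyperbolic law of cosines for an isosceles hinge with legs `r`; the bound comes
from linearizing `cosh` at the degenerate hinge `D = 2r`. -/
theorem tanh_mul_one_add_cos_le {r D η : ℝ} (hr : 0 < r)
    (hD : cosh D ≤ cosh r * cosh r - sinh r * sinh r * cos η) :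
    tanh r * (1 + cos η) ≤ 2 * (2 * r - D) := by
  have htangent := cosh_add_sinh_mul_sub_le_cosh (2 * r) D
  rw [cosh_two_mul, sinh_two_mul] at htangent
  have hsinh : 0 < sinh r := sinh_pos_iff.2 hr
  have key : sinh r * (sinh r * (1 + cos η)) ≤ sinh r * (2 * (2 * r - D) * cosh r) := by
    nlinarith
  rw [tanh_eq_sinh_div_cosh, div_mul_eq_mul_div, div_le_iff₀ (cosh_pos r)]
  exact le_of_mul_le_mul_left key hsinh

theorem sq_pi_sub_le_mul_one_add_cos {η : ℝ} (hη : η ∈ Icc 0 π) :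
    (π - η) ^ 2 ≤ π ^ 2 / 2 * (1 + cos η) := by
  have hjordan := mul_le_sin (x := (π - η) / 2) (by linarith [hη.2]) (by linarith [hη.1])
  have hhalf : sin ((π - η) / 2) ^ 2 = (1 + cos η) / 2 := by
    rw [show (π - η) / 2 = π / 2 - η / 2 by ring, sin_pi_div_two_sub, cos_sq, mul_div_cancel₀ η two_ne_zero]
    ring
  have hsq := pow_le_pow_left₀ (mul_nonneg (by positivity) (by linarith [hη.2])) hjordan 2
  rw [hhalf, mul_pow, div_pow, div_mul_eq_mul_div, div_le_iff₀ (by positivity)] at hsq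
  nlinarith [pi_pos]

/-- Almost-minimizing shortcut estimate.  A closed Riemannian manifold with
`Sec ≥ −Λ²` is encoded as a compact metric space; `γ₁, γ₂` are unit-speed minimizing
geodesics from `q` to `p` and from `q` to `x` respectively, making an angle
`η ∈ [0, π]` at `q`, encoded via the Toponogov hinge comparison with the rescaled
hyperbolic plane of curvature `−Λ²`.  If `d(p,q) > Λ⁻¹/2`, `d(q,x) ≥ Λ⁻¹` and
`d(p,q) + d(q,x) ≤ d(p,x) + δ`, then `(π − η)² ≤ 2 C₇⁻¹ δ`, where `C₇ > 0` is the
uniform hinge-comparison constant depending only on `Λ`. -/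
theorem stmt_11 (Λ : ℝ) (hΛ : 1 ≤ Λ) :
    ∃ C₇ : ℝ, 0 < C₇ ∧
      ∀ (M : Type) [MetricSpace M] [CompactSpace M]
        (p q x : M) (γ₁ γ₂ : ℝ → M) (η δ : ℝ),
        0 < δ →
        Λ⁻¹ / 2 < dist p q → Λ⁻¹ ≤ dist q x →
        dist p q + dist q x ≤ dist p x + δ →
        γ₁ 0 = q → γ₂ 0 = q → γ₁ (dist q p) = p → γ₂ (dist q x) = x →
        (∀ s ∈ Set.Icc (0 : ℝ) (dist q p), ∀ t ∈ Set.Icc (0 : ℝ) (dist q p),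
          dist (γ₁ s) (γ₁ t) = |s - t|) →
        (∀ s ∈ Set.Icc (0 : ℝ) (dist q x), ∀ t ∈ Set.Icc (0 : ℝ) (dist q x),
          dist (γ₂ s) (γ₂ t) = |s - t|) →
        η ∈ Set.Icc 0 Real.pi →
        (∀ s ∈ Set.Icc (0 : ℝ) (dist q p), ∀ t ∈ Set.Icc (0 : ℝ) (dist q x),
          Real.cosh (Λ * dist (γ₁ s) (γ₂ t)) ≤
            Real.cosh (Λ * s) * Real.cosh (Λ * t) -
              Real.sinh (Λ * s) * Real.sinh (Λ * t) * Real.cos η) →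
        (Real.pi - η) ^ 2 ≤ 2 * C₇⁻¹ * δ := by
  have hΛ₀ : 0 < Λ := by linarith
  have htanh : 0 < tanh (1 / 4) := by
    rw [tanh_eq_sinh_div_cosh]; exact div_pos (sinh_pos_iff.2 (by norm_num)) (cosh_pos _)
  refine ⟨2 * tanh (1 / 4) / (π ^ 2 * Λ), by positivity, ?_⟩
  intro M _ _ p q x γ₁ γ₂ η δ _ hpq hqx halm _ _ hγ₁p hγ₂x hγ₁ hγ₂ hη hhinge
  set s := Λ⁻¹ / 4
  have hΛs : Λ * s = 1 / 4 := by simp only [s]; field_simp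
  have hs : s < Λ⁻¹ / 2 := by simp only [s]; linarith [inv_pos.2 hΛ₀]
  have hs₁ : s ∈ Icc 0 (dist q p) := ⟨by positivity, by linarith [dist_comm p q]⟩
  have hs₂ : s ∈ Icc 0 (dist q x) := ⟨by positivity, by linarith [inv_pos.2 hΛ₀]⟩
  have hshort := add_sub_le_dist_of_almost_minimizing halm hγ₁p hγ₂x hγ₁ hγ₂ hs₁ hs₂
  have hcomp := tanh_mul_one_add_cos_le (by norm_num) (hΛs ▸ hhinge s hs₁ s hs₂)
  have hcos : tanh (1 / 4) * (1 + cos η) ≤ 2 * (Λ * δ) := by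
    nlinarith [mul_le_mul_of_nonneg_left hshort hΛ₀.le]
  calc (π - η) ^ 2 ≤ π ^ 2 / 2 * (1 + cos η) := sq_pi_sub_le_mul_one_add_cos hη
    _ ≤ π ^ 2 / 2 * (2 * (Λ * δ) / tanh (1 / 4)) := by
      gcongr; rw [le_div_iff₀ htanh, mul_comm]; exact hcos
    _ = 2 * (2 * tanh (1 / 4) / (π ^ 2 * Λ))⁻¹ * δ := by field_simp
end
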